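/- (Discrete case of Proposition 1.9, Moore.) Let H and G be groups with universal central extensions (H̃, i_H : C_H → H̃, p_H) and (G̃, i_G : C_G → G̃, p_G), let i : H → G be a group homomorphism, and let i_* : C_H → C_G be the induced homomorphism on kernels (determined by i_G ∘ i_* = ĩ ∘ i_H, where ĩ : H̃ → G̃ is the unique lift of i). For a commutative group A and a homomorphism f : C_G → A, the pullback i*(f_*G̃) of the pushout extension f_*G̃ along i splits (i.e., admits an equivalence to the trivial central extension H × A) if and only if f ∘ i_* is the trivial homomorphism C_H → A. (Thus central extensions of G by A split over H correspond to homomorphisms C_G/i_*(C_H) → A, giving the relative fundamental group π₁(G,H) = π₁(G)/i_*(π₁(H)).) -/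

import Mathlib

universe u

/-- A central extension of a group `G` by a commutative group `A`:
`i : A →* E` is injective with central image, `p : E →* G` is surjective,
and `ker p = range i`. -/
class IsCentralExtension {A E G : Type*} [CommGroup A] [Group E] [Group G]
    (i : A →* E) (p : E →* G) : Prop where
  inj : Function.Injective i
  mem_center : ∀ a : A, i a ∈ Subgroup.center E
  surj : Function.Surjective p
  ker_eq_range : MonoidHom.ker p = MonoidHom.range i

/-- `(Ẽ, i₀, p₀)` is a universal central extension of `G`: it is a central extension of
`G` by `C`, and for every commutative group `A` and every central extension `(E,i,p)` of
`G` by `A`, there exists a unique homomorphism `φ : Ẽ →* E` lying over the identity of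
`G`, i.e. with `p ∘ φ = p₀`. -/
def IsUniversalCentralExtension {G C Et : Type u} [Group G] [CommGroup C] [Group Et]
    (i₀ : C →* Et) (p₀ : Et →* G) : Prop :=
  IsCentralExtension i₀ p₀ ∧
  ∀ (A E : Type u) [CommGroup A] [Group E] (i : A →* E) (p : E →* G),
    IsCentralExtension i p → ∃! φ : Et →* E, p.comp φ = p₀
theorem IsCentralExtension.p_i {A E G : Type*} [CommGroup A] [Group E] [Group G]
    (i : A →* E) (p : E →* G) [h : IsCentralExtension i p] (a : A) : p (i a) = 1 := by
  rw [← MonoidHom.mem_ker, h.ker_eq_range]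
  exact ⟨a, rfl⟩

section Pushout

variable {G A B E : Type*} [Group G] [CommGroup A] [CommGroup B] [Group E]

/-- The subgroup `N = {(f(a), i(a)⁻¹) : a ∈ A}` of `B × E`, along which the
pushout of a central extension `(E, i, p)` of `G` by `A` under `f : A →* B` is formed. -/
def pushN (f : A →* B) (i : A →* E) (p : E →* G) [IsCentralExtension i p] :
    Subgroup (B × E) where
  carrier := {x | ∃ a : A, x = (f a, (i a)⁻¹)}
  one_mem' := ⟨1, by simp; rfl⟩
  mul_mem' := by
    rintro _ _ ⟨a, rfl⟩ ⟨b, rfl⟩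
    refine ⟨a * b, ?_⟩
    have h2 : (i a)⁻¹ * (i b)⁻¹ = (i (a * b))⁻¹ := by
      rw [← mul_inv_rev, ← map_mul, mul_comm b a]
    rw [Prod.mk_mul_mk, ← map_mul, h2]
  inv_mem' := by
    rintro _ ⟨a, rfl⟩
    exact ⟨a⁻¹, by simp⟩

instance pushN_normal {f : A →* B} {i : A →* E} {p : E →* G} [IsCentralExtension i p] :
    (pushN f i p).Normal := by
  constructor
  rintro n ⟨a, rfl⟩ g
  refine ⟨a, ?_⟩
  have h2 := Subgroup.mem_center_iff.mp
    ((Subgroup.center E).inv_mem (IsCentralExtension.mem_center (i := i) (p := p) a)) g.2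
  have : g * (f a, (i a)⁻¹) * g⁻¹ = (f a, (i a)⁻¹) := by
    refine Prod.ext ?_ ?_
    · show g.1 * f a * g.1⁻¹ = f a
      rw [mul_comm g.1 (f a)]
      group
    · show g.2 * (i a)⁻¹ * g.2⁻¹ = (i a)⁻¹
      rw [h2]
      group
  rw [this]

/-- The structure map `i''(b) = [(b,1)]` of the pushout `f_*E = (B × E)/N`. -/
def pushI (f : A →* B) (i : A →* E) (p : E →* G) [IsCentralExtension i p] :
    B →* (B × E) ⧸ pushN f i p :=
  (QuotientGroup.mk' (pushN f i p)).comp (MonoidHom.inl B E)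

/-- The structure map `p''([(b,e)]) = p(e)` of the pushout `f_*E = (B × E)/N`;
it is well defined, being obtained from `QuotientGroup.lift`. -/
def pushP (f : A →* B) (i : A →* E) (p : E →* G) [IsCentralExtension i p] :
    ((B × E) ⧸ pushN f i p) →* G :=
  QuotientGroup.lift (pushN f i p) (p.comp (MonoidHom.snd B E))
    (by
      rintro _ ⟨a, rfl⟩
      simp only [MonoidHom.mem_ker, MonoidHom.comp_apply, MonoidHom.coe_snd, map_inv]
      rw [IsCentralExtension.p_i i p a, inv_one])

end Pushout

section Pullback

variable {H G E A : Type*} [Group H] [Group G] [Group E] [CommGroup A]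

/-- The pullback `j*E = {(h,e) ∈ H × E : j(h) = p(e)}` as a subgroup of `H × E`. -/
def pullbackSubgroup (j : H →* G) (p : E →* G) : Subgroup (H × E) where
  carrier := {x | j x.1 = p x.2}
  one_mem' := by simp
  mul_mem' := by
    intro a b ha hb
    simp only [Set.mem_setOf_eq, Prod.fst_mul, Prod.snd_mul, map_mul] at *
    rw [ha, hb]
  inv_mem' := by
    intro a ha
    simp only [Set.mem_setOf_eq, Prod.fst_inv, Prod.snd_inv, map_inv] at *
    rw [ha]

@[simp] theorem mem_pullbackSubgroup {j : H →* G} {p : E →* G} {x : H × E} :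
    x ∈ pullbackSubgroup j p ↔ j x.1 = p x.2 := Iff.rfl

/-- The structure map `a ↦ (1, i(a))` of the pullback. -/
def pullbackI (j : H →* G) (i : A →* E) (p : E →* G) (hpi : ∀ a, p (i a) = 1) :
    A →* ↥(pullbackSubgroup j p) where
  toFun a := ⟨(1, i a), by rw [mem_pullbackSubgroup]; simp [hpi a]⟩
  map_one' := by
    apply Subtype.ext
    simp
  map_mul' a b := by
    apply Subtype.ext
    simp [Prod.ext_iff]

/-- The structure map `(h,e) ↦ h` of the pullback. -/
def pullbackP (j : H →* G) (p : E →* G) : ↥(pullbackSubgroup j p) →* H :=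
  (MonoidHom.fst H E).comp (pullbackSubgroup j p).subtype

end Pullback

theorem pushP_pushI {G A B E : Type*} [Group G] [CommGroup A] [CommGroup B] [Group E]
    (f : A →* B) (i : A →* E) (p : E →* G) [IsCentralExtension i p] (b : B) :
    pushP f i p (pushI f i p b) = 1 :=
  map_one p

/-! The canonical map `θ : H̃ → i*(f_*G̃)`, `x ↦ (p_H x, [(1, ĩ x)])`, lies over `H` and restricts
on `C_H` to `ι ∘ f ∘ i_*`, where `ι : A → i*(f_*G̃)` is the structure map. If the pullback splits
by `φ`, then `φ ∘ θ` is a map over `H` into the trivial extension `H × A`; by universality it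
equals `h ↦ (h, 1)`, so it kills `C_H` and `f ∘ i_* = 1`. Conversely, if `f ∘ i_* = 1` then `θ`
kills `ker p_H = C_H` and descends to a homomorphic section `H → i*(f_*G̃)`; a central extension
with a homomorphic section is trivial. -/

section CentralExtension

variable {A E G : Type*} [CommGroup A] [Group E] [Group G]

instance isCentralExtension_inr_fst :
    IsCentralExtension (MonoidHom.inr G A) (MonoidHom.fst G A) where
  inj _ _ h := congrArg Prod.snd h
  mem_center a := Subgroup.mem_center_iff.mpr fun g => Prod.ext (by simp) (mul_comm _ _)
  surj g := ⟨(g, 1), rfl⟩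
  ker_eq_range := by
    ext ⟨g, a⟩
    simp [Subgroup.mem_prod, eq_comm]

theorem IsCentralExtension.exists_splitting_of_section (i : A →* E) (p : E →* G)
    [hext : IsCentralExtension i p] (s : G →* E) (hs : p.comp s = MonoidHom.id G) :
    ∃ φ : E →* G × A, φ.comp i = MonoidHom.inr G A ∧ (MonoidHom.fst G A).comp φ = p := by
  have hps (g : G) : p (s g) = g := DFunLike.congr_fun hs g
  let ψ : G × A →* E := s.noncommCoprod i fun g a =>
    Subgroup.mem_center_iff.mp (hext.mem_center a) (s g)
  have hψ (g : G) (a : A) : ψ (g, a) = s g * i a := rfl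
  have hpψ (x : G × A) : p (ψ x) = x.1 := by
    rw [← Prod.mk.eta (p := x), hψ, map_mul, hps, IsCentralExtension.p_i i p, mul_one]
  have hψ_inj : Function.Injective ψ := by
    refine (injective_iff_map_eq_one ψ).mpr fun ⟨g, a⟩ h => ?_
    obtain rfl : g = 1 := by simpa [hpψ] using congrArg p h
    rw [hψ, map_one, one_mul, ← map_one i] at h
    rw [hext.inj h]
    rfl
  have hψ_surj : Function.Surjective ψ := by
    intro e
    have hker : (s (p e))⁻¹ * e ∈ p.ker := by simp [hps]
    rw [hext.ker_eq_range] at hker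
    obtain ⟨a, ha⟩ := hker
    exact ⟨(p e, a), by rw [hψ, ha, mul_inv_cancel_left]⟩
  let Ψ := MulEquiv.ofBijective ψ ⟨hψ_inj, hψ_surj⟩
  refine ⟨Ψ.symm.toMonoidHom, ?_, ?_⟩
  · refine MonoidHom.ext fun a => Ψ.symm_apply_eq.mpr ?_
    change i a = ψ (1, a)
    rw [hψ, map_one, one_mul]
  · ext e
    conv_rhs => rw [← Ψ.apply_symm_apply e]
    exact (hpψ _).symm

theorem exists_section_of_ker_le {K H E : Type*} [Group K] [Group H] [Group E]
    (pK : K →* H) (hpK : Function.Surjective pK) (π : E →* H) (θ : K →* E)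
    (hθ : π.comp θ = pK) (hker : pK.ker ≤ θ.ker) :
    ∃ s : H →* E, π.comp s = MonoidHom.id H := by
  let s := pK.liftOfRightInverse _ (Function.rightInverse_surjInv hpK) ⟨θ, hker⟩
  refine ⟨s, MonoidHom.ext fun h => ?_⟩
  obtain ⟨x, rfl⟩ := hpK h
  simp only [s, MonoidHom.comp_apply, MonoidHom.liftOfRightInverse_comp_apply]
  exact DFunLike.congr_fun hθ x

end CentralExtension

theorem IsUniversalCentralExtension.eq_inl_comp {H C Ht A : Type u} [Group H] [CommGroup C]
    [Group Ht] [CommGroup A] {iH : C →* Ht} {pH : Ht →* H}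
    (hH : IsUniversalCentralExtension iH pH) (φ : Ht →* H × A)
    (hφ : (MonoidHom.fst H A).comp φ = pH) :
    φ = (MonoidHom.inl H A).comp pH := by
  obtain ⟨_, _, huniq⟩ := hH.2 A (H × A) _ _ isCentralExtension_inr_fst
  exact (huniq φ hφ).trans (huniq _ (MonoidHom.ext fun _ => rfl)).symm

section Pushout

variable {G A B E : Type*} [Group G] [CommGroup A] [CommGroup B] [Group E]
  (f : A →* B) (i : A →* E) (p : E →* G) [hext : IsCentralExtension i p]

def pushInr : E →* (B × E) ⧸ pushN f i p :=
  (QuotientGroup.mk' _).comp (MonoidHom.inr B E)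

theorem pushP_comp_pushInr : (pushP f i p).comp (pushInr f i p) = p := rfl

theorem mk_prod_i_eq_pushI (b : B) (a : A) :
    (QuotientGroup.mk (b, i a) : (B × E) ⧸ pushN f i p) = pushI f i p (b * f a) :=
  QuotientGroup.eq.mpr ⟨a, by simp⟩

theorem pushInr_i (a : A) : pushInr f i p (i a) = pushI f i p (f a) := by
  rw [← one_mul (f a), ← mk_prod_i_eq_pushI]
  rfl

instance isCentralExtension_pushout : IsCentralExtension (pushI f i p) (pushP f i p) where
  inj := by
    refine (injective_iff_map_eq_one _).mpr fun b hb => ?_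
    obtain ⟨a, ha⟩ := (QuotientGroup.eq_one_iff _).mp hb
    obtain rfl : a = 1 := hext.inj (by simpa using congrArg Prod.snd ha)
    simpa using congrArg Prod.fst ha
  mem_center b := Subgroup.mem_center_iff.mpr fun q => by
    obtain ⟨x, rfl⟩ := QuotientGroup.mk_surjective q
    exact congrArg QuotientGroup.mk (Prod.ext (mul_comm _ _) (by simp))
  surj g := by
    obtain ⟨e, he⟩ := hext.surj g
    exact ⟨pushInr f i p e, he⟩
  ker_eq_range := by
    refine le_antisymm (fun q hq => ?_)
      ((MonoidHom.range_le_ker_iff _ _).mpr (MonoidHom.ext (pushP_pushI f i p)))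
    obtain ⟨⟨b, e⟩, rfl⟩ := QuotientGroup.mk_surjective q
    obtain ⟨a, rfl⟩ : e ∈ i.range := hext.ker_eq_range ▸ hq
    exact ⟨b * f a, (mk_prod_i_eq_pushI f i p b a).symm⟩

end Pushout

section Pullback

variable {K H G E A : Type*} [Group K] [Group H] [Group G] [Group E] [CommGroup A]
  (j : H →* G) (p : E →* G)

def pullbackLift (r : K →* H) (q : K →* E) (h : j.comp r = p.comp q) :
    K →* pullbackSubgroup j p :=
  (r.prod q).codRestrict _ fun x => DFunLike.congr_fun h x

theorem pullbackP_comp_pullbackLift (r : K →* H) (q : K →* E) (h : j.comp r = p.comp q) :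
    (pullbackP j p).comp (pullbackLift j p r q h) = r := rfl

theorem isCentralExtension_pullback (i : A →* E) (hpi : ∀ a, p (i a) = 1)
    [hext : IsCentralExtension i p] :
    IsCentralExtension (pullbackI j i p hpi) (pullbackP j p) where
  inj _ _ h := hext.inj (congrArg (fun x => x.1.2) h)
  mem_center a := Subgroup.mem_center_iff.mpr fun x => Subtype.ext <|
    Prod.ext (by simp [pullbackI]) (Subgroup.mem_center_iff.mp (hext.mem_center a) x.1.2)
  surj h := by
    obtain ⟨e, he⟩ := hext.surj (j h)
    exact ⟨⟨(h, e), he.symm⟩, rfl⟩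
  ker_eq_range := by
    refine le_antisymm ?_ ?_
    · rintro ⟨⟨h, e⟩, hx⟩ (rfl : h = 1)
      obtain ⟨a, rfl⟩ : e ∈ i.range := by
        rw [← hext.ker_eq_range, MonoidHom.mem_ker, ← mem_pullbackSubgroup.mp hx, map_one]
      exact ⟨a, rfl⟩
    · rintro _ ⟨a, rfl⟩
      rfl

end Pullback

theorem pullback_pushout_splits_iff_general {H G CH CG Ht Gt A : Type u}
    [Group H] [Group G] [CommGroup CH] [CommGroup CG] [Group Ht] [Group Gt] [CommGroup A]
    (iH : CH →* Ht) (pH : Ht →* H) (iG : CG →* Gt) (pG : Gt →* G)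
    (hH : IsUniversalCentralExtension iH pH)
    [IsCentralExtension iG pG]
    (i : H →* G) (it : Ht →* Gt) (hit : pG.comp it = i.comp pH)
    (ist : CH →* CG) (hist : iG.comp ist = it.comp iH)
    (f : CG →* A) :
    (∃ φ : ↥(pullbackSubgroup i (pushP f iG pG)) →* H × A,
        φ.comp (pullbackI i (pushI f iG pG) (pushP f iG pG)
            (fun b => pushP_pushI f iG pG b)) = MonoidHom.inr H A ∧
        (MonoidHom.fst H A).comp φ = pullbackP i (pushP f iG pG)) ↔
      f.comp ist = 1 := by
  have := hH.1
  set ι := pullbackI i (pushI f iG pG) (pushP f iG pG) (fun b => pushP_pushI f iG pG b)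
  let θ := pullbackLift i (pushP f iG pG) pH ((pushInr f iG pG).comp it)
    (by rw [← MonoidHom.comp_assoc, pushP_comp_pushInr, hit])
  have hθ_iH (c : CH) : θ (iH c) = ι (f (ist c)) := by
    refine Subtype.ext (Prod.ext (IsCentralExtension.p_i iH pH c) ?_)
    change pushInr f iG pG (it (iH c)) = pushI f iG pG (f (ist c))
    rw [← MonoidHom.comp_apply it, ← hist, MonoidHom.comp_apply, pushInr_i]
  constructor
  · rintro ⟨φ, hφι, hφπ⟩
    have hφθ : φ.comp θ = (MonoidHom.inl H A).comp pH := hH.eq_inl_comp _ <| by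
      rw [← MonoidHom.comp_assoc, hφπ, pullbackP_comp_pullbackLift]
    refine MonoidHom.ext fun c => ?_
    have := congrArg Prod.snd (DFunLike.congr_fun hφθ (iH c))
    rwa [MonoidHom.comp_apply, hθ_iH, ← MonoidHom.comp_apply φ ι, hφι] at this
  · intro hf
    have := isCentralExtension_pullback i (pushP f iG pG) (pushI f iG pG)
      (fun b => pushP_pushI f iG pG b)
    obtain ⟨s, hs⟩ := exists_section_of_ker_le pH hH.1.surj _ θ
      (pullbackP_comp_pullbackLift ..) <| by
        rw [IsCentralExtension.ker_eq_range (i := iH)]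
        rintro _ ⟨c, rfl⟩
        rw [MonoidHom.mem_ker, hθ_iH, ← MonoidHom.comp_apply f, hf, MonoidHom.one_apply, map_one]
    exact IsCentralExtension.exists_splitting_of_section ι _ s hs

/-- discrete case of Proposition 1.9, Moore: with `(H̃, i_H, p_H)` and
`(G̃, i_G, p_G)` universal central extensions of `H` and `G`, `i : H →* G`, `ĩ` the lift
of `i` and `i_* : C_H →* C_G` the induced map on kernels, and `f : C_G →* A`, the
pullback `i*(f_*G̃)` of the pushout extension `f_*G̃` along `i` splits (admits an
equivalence to the trivial central extension `H × A`) if and only if `f ∘ i_*` is the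
trivial homomorphism. -/
theorem pullback_pushout_splits_iff {H G CH CG Ht Gt A : Type u}
    [Group H] [Group G] [CommGroup CH] [CommGroup CG] [Group Ht] [Group Gt] [CommGroup A]
    (iH : CH →* Ht) (pH : Ht →* H) (iG : CG →* Gt) (pG : Gt →* G)
    (hH : IsUniversalCentralExtension iH pH) (hG : IsUniversalCentralExtension iG pG)
    [IsCentralExtension iG pG]
    (i : H →* G) (it : Ht →* Gt) (hit : pG.comp it = i.comp pH)
    (ist : CH →* CG) (hist : iG.comp ist = it.comp iH)
    (f : CG →* A) :
    (∃ φ : ↥(pullbackSubgroup i (pushP f iG pG)) →* H × A,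
        φ.comp (pullbackI i (pushI f iG pG) (pushP f iG pG)
            (fun b => pushP_pushI f iG pG b)) = MonoidHom.inr H A ∧
        (MonoidHom.fst H A).comp φ = pullbackP i (pushP f iG pG)) ↔
      f.comp ist = 1 :=
  pullback_pushout_splits_iff_general iH pH iG pG hH i it hit ist hist f
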